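/- Let b, B : U → ℝ be smooth, suppose Δ = b_x b_y − b·b_{xy} vanishes nowhere on U, and suppose the two integrability conditions hold on all of U: (J₁) the function P = (b_y B_x − b B_{xy})/Δ satisfies ∂P/∂y = 0, and (J₂) ∂P/∂x = (b_x B_{xy} − b_{xy} B_x)/Δ. Then there exist smooth s₁ : I → ℝ and s₂ : J → ℝ with b(x,y)·s₁′(x) + s₂′(y) = B(x,y) on U; moreover, for any two solution pairs (s₁, s₂) and (s̃₁, s̃₂) the differences s₁ − s̃₁ and s₂ − s̃₂ are constant, so the set of solution pairs is a 2-dimensional affine subspace of the space of pairs of functions. -/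

import Mathlib

/-!
If `b s₁' + s₂' = B`, differentiating in `x` and then in `y` and solving the resulting linear
system (of determinant `Δ`) gives `s₁'(x) = P(x, y)`. Conversely, `J₁` says that `P` depends on
`x` only and `J₂` says exactly that `∂ₓ(B - b P) = 0`, so `B = b f(x) + g(y)` and primitives of
`f` and `g` solve the equation. The difference `(u, v)` of the derivatives of two solutions
satisfies `b(x, y) u(x) + v(y) = 0`; where `u(x) ≠ 0` this makes `u` differentiable at `x`, and
differentiating the relation in `x` and then in `y` yields `u(x) Δ = 0`.
-/

open Set

noncomputable def pdx (g : ℝ × ℝ → ℝ) (p : ℝ × ℝ) : ℝ :=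
  deriv (fun x => g (x, p.2)) p.1

noncomputable def pdy (g : ℝ × ℝ → ℝ) (p : ℝ × ℝ) : ℝ :=
  deriv (fun y => g (p.1, y)) p.2

open Filter Topology
open scoped ContDiff

section PartialDerivatives

variable {g : ℝ × ℝ → ℝ} {p : ℝ × ℝ}

theorem hasDerivAt_pdx (hg : DifferentiableAt ℝ g p) :
    HasDerivAt (fun x => g (x, p.2)) (pdx g p) p.1 :=
  (hg.comp p.1 (differentiableAt_id.prodMk (differentiableAt_const p.2))).hasDerivAt

theorem hasDerivAt_pdy (hg : DifferentiableAt ℝ g p) :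
    HasDerivAt (fun y => g (p.1, y)) (pdy g p) p.2 :=
  (hg.comp p.2 ((differentiableAt_const p.1).prodMk differentiableAt_id)).hasDerivAt

theorem pdx_eq_fderiv (hg : DifferentiableAt ℝ g p) : pdx g p = fderiv ℝ g p (1, 0) :=
  (hg.hasFDerivAt.comp_hasDerivAt p.1
    ((hasDerivAt_id p.1).prodMk (hasDerivAt_const p.1 p.2))).deriv

theorem pdy_eq_fderiv (hg : DifferentiableAt ℝ g p) : pdy g p = fderiv ℝ g p (0, 1) :=
  (hg.hasFDerivAt.comp_hasDerivAt p.2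
    ((hasDerivAt_const p.2 p.1).prodMk (hasDerivAt_id p.2))).deriv

variable {U : Set (ℝ × ℝ)}

theorem contDiffOn_pdx (hU : IsOpen U) (hg : ContDiffOn ℝ ∞ g U) :
    ContDiffOn ℝ ∞ (pdx g) U :=
  ((hg.fderiv_of_isOpen hU le_rfl).clm_apply contDiffOn_const).congr fun _ hq =>
    pdx_eq_fderiv (hg.differentiableOn (by simp) |>.differentiableAt (hU.mem_nhds hq))

theorem contDiffOn_pdy (hU : IsOpen U) (hg : ContDiffOn ℝ ∞ g U) :
    ContDiffOn ℝ ∞ (pdy g) U :=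
  ((hg.fderiv_of_isOpen hU le_rfl).clm_apply contDiffOn_const).congr fun _ hq =>
    pdy_eq_fderiv (hg.differentiableOn (by simp) |>.differentiableAt (hU.mem_nhds hq))

theorem eq_of_pdx_eq_zero {I : Set ℝ} (hI : IsOpen I) (hIc : IsPreconnected I) {y : ℝ}
    (hg : ∀ x ∈ I, DifferentiableAt ℝ g (x, y)) (h : ∀ x ∈ I, pdx g (x, y) = 0)
    {x x' : ℝ} (hx : x ∈ I) (hx' : x' ∈ I) : g (x, y) = g (x', y) :=
  hI.is_const_of_deriv_eq_zero (f := fun x => g (x, y)) hIc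
    (fun z hz => (hasDerivAt_pdx (hg z hz)).differentiableAt.differentiableWithinAt) h hx hx'

theorem eq_of_pdy_eq_zero {J : Set ℝ} (hJ : IsOpen J) (hJc : IsPreconnected J) {x : ℝ}
    (hg : ∀ y ∈ J, DifferentiableAt ℝ g (x, y)) (h : ∀ y ∈ J, pdy g (x, y) = 0)
    {y y' : ℝ} (hy : y ∈ J) (hy' : y' ∈ J) : g (x, y) = g (x, y') :=
  hJ.is_const_of_deriv_eq_zero (f := fun y => g (x, y)) hJc
    (fun z hz => (hasDerivAt_pdy (hg z hz)).differentiableAt.differentiableWithinAt) h hy hy'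

end PartialDerivatives

theorem exists_contDiffOn_forall_hasDerivAt {s : Set ℝ} (hs : IsOpen s) (hsc : s.OrdConnected)
    {f : ℝ → ℝ} (hf : ContDiffOn ℝ ∞ f s) :
    ∃ F : ℝ → ℝ, ContDiffOn ℝ ∞ F s ∧ ∀ x ∈ s, HasDerivAt F (f x) x := by
  rcases s.eq_empty_or_nonempty with rfl | ⟨a, ha⟩
  · exact ⟨0, contDiffOn_empty, fun _ hx => hx.elim⟩
  have hF : ∀ x ∈ s, HasDerivAt (fun z => ∫ t in a..z, f t) (f x) x := fun x hx =>
    intervalIntegral.integral_hasDerivAt_right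
      (hf.continuousOn.mono (hsc.uIcc_subset ha hx)).intervalIntegrable
      (hf.continuousOn.stronglyMeasurableAtFilter hs x hx)
      (hf.continuousOn.continuousAt (hs.mem_nhds hx))
  refine ⟨_, (contDiffOn_infty_iff_deriv_of_isOpen hs).2 ⟨?_, ?_⟩, hF⟩
  · exact fun x hx => (hF x hx).differentiableAt.differentiableWithinAt
  · exact hf.congr fun x hx => (hF x hx).deriv

theorem exists_sub_eq_of_deriv_eq {s : Set ℝ} (hs : IsOpen s) (hsc : IsPreconnected s)
    {f g : ℝ → ℝ} (hf : DifferentiableOn ℝ f s) (hg : DifferentiableOn ℝ g s)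
    (h : EqOn (deriv f) (deriv g) s) : ∃ c, ∀ x ∈ s, f x - g x = c := by
  obtain ⟨c, hc⟩ := hs.exists_eq_add_of_deriv_eq hsc hf hg h
  exact ⟨c, fun x hx => by rw [hc hx]; ring⟩

theorem differentiableAt_of_mul_eventuallyEq_const {β u : ℝ → ℝ} {x c : ℝ}
    (hβ : DifferentiableAt ℝ β x) (hβx : β x ≠ 0) (h : ∀ᶠ z in 𝓝 x, β z * u z = c) :
    DifferentiableAt ℝ u x := by
  refine (differentiableAt_const c |>.div hβ hβx).congr_of_eventuallyEq ?_
  filter_upwards [h, hβ.continuousAt.eventually_ne hβx] with z hz hβz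
  change u z = c / β z
  rw [← hz, mul_div_cancel_left₀ _ hβz]

noncomputable def samuelsonDelta (b : ℝ × ℝ → ℝ) (p : ℝ × ℝ) : ℝ :=
  pdx b p * pdy b p - b p * pdy (pdx b) p

noncomputable def samuelsonP (b B : ℝ × ℝ → ℝ) (p : ℝ × ℝ) : ℝ :=
  (pdy b p * pdx B p - b p * pdy (pdx B) p) / samuelsonDelta b p

section Samuelson

variable {I J : Set ℝ} {b B : ℝ × ℝ → ℝ}

theorem exists_ne_zero_of_samuelsonDelta_ne_zero {x y : ℝ} {s : Set ℝ} (hs : s ∈ 𝓝 y)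
    (hΔ : samuelsonDelta b (x, y) ≠ 0) : ∃ y' ∈ s, b (x, y') ≠ 0 := by
  by_contra! h
  have hby : pdy b (x, y) = 0 := by
    have hzero : (fun y' => b (x, y')) =ᶠ[𝓝 y] fun _ => 0 := eventually_of_mem hs h
    exact hzero.deriv_eq.trans (deriv_const y 0)
  simp [samuelsonDelta, h y (mem_of_mem_nhds hs), hby] at hΔ

theorem eq_zero_of_mul_add_eq_zero (hI : IsOpen I) (hJ : IsOpen J) (hJne : J.Nonempty)
    (hb : ∀ p ∈ I ×ˢ J, DifferentiableAt ℝ b p)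
    (hbx : ∀ p ∈ I ×ˢ J, DifferentiableAt ℝ (pdx b) p)
    (hΔ : ∀ p ∈ I ×ˢ J, samuelsonDelta b p ≠ 0) {u v : ℝ → ℝ}
    (h : ∀ x ∈ I, ∀ y ∈ J, b (x, y) * u x + v y = 0) {x : ℝ} (hx : x ∈ I) : u x = 0 := by
  by_contra hu
  obtain ⟨y₀, hy₀⟩ := hJne
  have hslice : ∀ y ∈ J, ∀ᶠ z in 𝓝 x, b (z, y) * u z = -v y := fun y hy =>
    eventually_of_mem (hI.mem_nhds hx) fun z hz => eq_neg_of_add_eq_zero_left (h z hz y hy)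
  obtain ⟨y, hy, hby⟩ :=
    exists_ne_zero_of_samuelsonDelta_ne_zero (hJ.mem_nhds hy₀) (hΔ (x, y₀) ⟨hx, hy₀⟩)
  obtain ⟨d, hd⟩ : ∃ d, HasDerivAt u d x :=
    ⟨deriv u x, (differentiableAt_of_mul_eventuallyEq_const
      (hasDerivAt_pdx (p := (x, y)) (hb _ ⟨hx, hy⟩)).differentiableAt hby
      (hslice y hy)).hasDerivAt⟩
  have hdx : ∀ y' ∈ J, pdx b (x, y') * u x + b (x, y') * d = 0 := fun y' hy' =>
    ((hasDerivAt_pdx (hb _ ⟨hx, hy'⟩)).mul hd).unique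
      ((hasDerivAt_const x (-v y')).congr_of_eventuallyEq (hslice y' hy'))
  have hdxy : pdy (pdx b) (x, y) * u x + pdy b (x, y) * d = 0 :=
    (((hasDerivAt_pdy (hbx _ ⟨hx, hy⟩)).mul_const (u x)).add
      ((hasDerivAt_pdy (hb _ ⟨hx, hy⟩)).mul_const d)).unique
      ((hasDerivAt_const y 0).congr_of_eventuallyEq (eventually_of_mem (hJ.mem_nhds hy) hdx))
  have hΔu : u x * samuelsonDelta b (x, y) = 0 := by
    unfold samuelsonDelta
    linear_combination pdy b (x, y) * hdx y hy - b (x, y) * hdxy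
  exact hΔ (x, y) ⟨hx, hy⟩ ((mul_eq_zero.1 hΔu).resolve_left hu)

theorem contDiffOn_samuelsonP {U : Set (ℝ × ℝ)} (hU : IsOpen U) (hb : ContDiffOn ℝ ∞ b U)
    (hB : ContDiffOn ℝ ∞ B U) (hΔ : ∀ p ∈ U, samuelsonDelta b p ≠ 0) :
    ContDiffOn ℝ ∞ (samuelsonP b B) U :=
  have hbx := contDiffOn_pdx hU hb
  ((((contDiffOn_pdy hU hb).mul (contDiffOn_pdx hU hB)).sub
    (hb.mul (contDiffOn_pdy hU (contDiffOn_pdx hU hB)))).div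
    ((hbx.mul (contDiffOn_pdy hU hb)).sub (hb.mul (contDiffOn_pdy hU hbx))) hΔ)

theorem pdx_sub_mul_samuelsonP {p : ℝ × ℝ} (hb : DifferentiableAt ℝ b p)
    (hB : DifferentiableAt ℝ B p) (hP : DifferentiableAt ℝ (samuelsonP b B) p)
    (hΔ : samuelsonDelta b p ≠ 0)
    (hJ₂ : pdx (samuelsonP b B) p
      = (pdx b p * pdy (pdx B) p - pdy (pdx b) p * pdx B p) / samuelsonDelta b p) :
    pdx (fun q => B q - b q * samuelsonP b B q) p = 0 := by
  refine ((hasDerivAt_pdx hB).sub ((hasDerivAt_pdx hb).mul (hasDerivAt_pdx hP))).deriv.trans ?_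
  rw [hJ₂, samuelsonP]
  unfold samuelsonDelta at hΔ ⊢
  field_simp
  ring

theorem exists_eq_mul_add_of_samuelson (hI : IsOpen I) (hJ : IsOpen J)
    (hIc : IsPreconnected I) (hJc : IsPreconnected J)
    (hb : ContDiffOn ℝ ∞ b (I ×ˢ J)) (hB : ContDiffOn ℝ ∞ B (I ×ˢ J))
    (hΔ : ∀ p ∈ I ×ˢ J, samuelsonDelta b p ≠ 0)
    (hJ₁ : ∀ p ∈ I ×ˢ J, pdy (samuelsonP b B) p = 0)
    (hJ₂ : ∀ p ∈ I ×ˢ J, pdx (samuelsonP b B) p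
      = (pdx b p * pdy (pdx B) p - pdy (pdx b) p * pdx B p) / samuelsonDelta b p) :
    ∃ f g : ℝ → ℝ, ContDiffOn ℝ ∞ f I ∧ ContDiffOn ℝ ∞ g J ∧
      ∀ p ∈ I ×ˢ J, B p = b p * f p.1 + g p.2 := by
  rcases (I ×ˢ J).eq_empty_or_nonempty with hU | ⟨⟨x₀, y₀⟩, hx₀, hy₀⟩
  · exact ⟨0, 0, contDiffOn_const, contDiffOn_const, by simp [hU]⟩
  have hU := hI.prod hJ
  have hP := contDiffOn_samuelsonP hU hb hB hΔ
  have hdiff {g : ℝ × ℝ → ℝ} (hg : ContDiffOn ℝ ∞ g (I ×ˢ J)) {x y : ℝ} (hx : x ∈ I)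
      (hy : y ∈ J) : DifferentiableAt ℝ g (x, y) :=
    (hg.contDiffAt (hU.mem_nhds ⟨hx, hy⟩)).differentiableAt (by simp)
  have hQ : ContDiffOn ℝ ∞ (fun q => B q - b q * samuelsonP b B q) (I ×ˢ J) :=
    hB.sub (hb.mul hP)
  refine ⟨fun x => samuelsonP b B (x, y₀), fun y => B (x₀, y) - b (x₀, y) * samuelsonP b B (x₀, y),
    hP.comp (contDiffOn_id.prodMk contDiffOn_const) fun x hx => ⟨hx, hy₀⟩,
    hQ.comp (contDiffOn_const.prodMk contDiffOn_id) fun y hy => ⟨hx₀, hy⟩, ?_⟩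
  rintro ⟨x, y⟩ ⟨hx, hy⟩
  have hPx : samuelsonP b B (x, y) = samuelsonP b B (x, y₀) :=
    eq_of_pdy_eq_zero hJ hJc (fun y hy => hdiff hP hx hy) (fun y hy => hJ₁ _ ⟨hx, hy⟩) hy hy₀
  have hQy := eq_of_pdx_eq_zero hI hIc (fun x hx => hdiff hQ hx hy)
    (fun x hx => pdx_sub_mul_samuelsonP (hdiff hb hx hy) (hdiff hB hx hy) (hdiff hP hx hy)
      (hΔ _ ⟨hx, hy⟩) (hJ₂ _ ⟨hx, hy⟩)) hx hx₀
  simp only at hQy ⊢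
  linear_combination hQy + b (x, y) * hPx

theorem exists_solution_of_eq_mul_add (hI : IsOpen I) (hJ : IsOpen J)
    (hIc : I.OrdConnected) (hJc : J.OrdConnected) {f g : ℝ → ℝ}
    (hf : ContDiffOn ℝ ∞ f I) (hg : ContDiffOn ℝ ∞ g J)
    (h : ∀ p ∈ I ×ˢ J, B p = b p * f p.1 + g p.2) :
    ∃ s₁ s₂ : ℝ → ℝ, ContDiffOn ℝ ∞ s₁ I ∧ ContDiffOn ℝ ∞ s₂ J ∧
      ∀ p ∈ I ×ˢ J, b p * deriv s₁ p.1 + deriv s₂ p.2 = B p := by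
  obtain ⟨s₁, hs₁, hd₁⟩ := exists_contDiffOn_forall_hasDerivAt hI hIc hf
  obtain ⟨s₂, hs₂, hd₂⟩ := exists_contDiffOn_forall_hasDerivAt hJ hJc hg
  refine ⟨s₁, s₂, hs₁, hs₂, fun p hp => ?_⟩
  rw [(hd₁ _ hp.1).deriv, (hd₂ _ hp.2).deriv, h p hp]

end Samuelson

/-- Solvability of `b·s₁'(x) + s₂'(y) = B(x,y)` when
`Δ = b_x b_y - b b_{xy} ≠ 0`: if the integrability conditions `J₁` and `J₂` hold
on `U` (the function `P = (b_y B_x - b B_{xy})/Δ` has vanishing `y`-derivative and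
its `x`-derivative equals `(b_x B_{xy} - b_{xy} B_x)/Δ`), then smooth solutions
`s₁, s₂` exist; moreover any two solution pairs differ by constants, so the
solution set is a 2-dimensional affine family. -/
theorem samuelson_s_equation_solvability
    (I J : Set ℝ) (hI : IsOpen I) (hJ : IsOpen J)
    (hIc : I.OrdConnected) (hJc : J.OrdConnected)
    (hne : (I ×ˢ J : Set (ℝ × ℝ)).Nonempty)
    (b B : ℝ × ℝ → ℝ)
    (hb : ContDiffOn ℝ (⊤ : ℕ∞) b (I ×ˢ J)) (hB : ContDiffOn ℝ (⊤ : ℕ∞) B (I ×ˢ J))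
    (hΔ : ∀ p ∈ I ×ˢ J, pdx b p * pdy b p - b p * pdy (pdx b) p ≠ 0)
    (hJ₁ : ∀ p ∈ I ×ˢ J,
      pdy (fun q => (pdy b q * pdx B q - b q * pdy (pdx B) q)
        / (pdx b q * pdy b q - b q * pdy (pdx b) q)) p = 0)
    (hJ₂ : ∀ p ∈ I ×ˢ J,
      pdx (fun q => (pdy b q * pdx B q - b q * pdy (pdx B) q)
        / (pdx b q * pdy b q - b q * pdy (pdx b) q)) p
      = (pdx b p * pdy (pdx B) p - pdy (pdx b) p * pdx B p)
        / (pdx b p * pdy b p - b p * pdy (pdx b) p)) :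
    (∃ s₁ s₂ : ℝ → ℝ, ContDiffOn ℝ (⊤ : ℕ∞) s₁ I ∧ ContDiffOn ℝ (⊤ : ℕ∞) s₂ J ∧
      ∀ p ∈ I ×ˢ J, b p * deriv s₁ p.1 + deriv s₂ p.2 = B p) ∧
    (∀ s₁ s₂ t₁ t₂ : ℝ → ℝ,
      DifferentiableOn ℝ s₁ I → DifferentiableOn ℝ s₂ J →
      DifferentiableOn ℝ t₁ I → DifferentiableOn ℝ t₂ J →
      (∀ p ∈ I ×ˢ J, b p * deriv s₁ p.1 + deriv s₂ p.2 = B p) →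
      (∀ p ∈ I ×ˢ J, b p * deriv t₁ p.1 + deriv t₂ p.2 = B p) →
      (∃ c₁ : ℝ, ∀ x ∈ I, s₁ x - t₁ x = c₁) ∧
      (∃ c₂ : ℝ, ∀ y ∈ J, s₂ y - t₂ y = c₂)) := by
  obtain ⟨⟨x₀, y₀⟩, hx₀, hy₀⟩ := hne
  have hU := hI.prod hJ
  refine ⟨?_, fun s₁ s₂ t₁ t₂ hs₁ hs₂ ht₁ ht₂ hs ht => ?_⟩
  · obtain ⟨f, g, hf, hg, hfg⟩ := exists_eq_mul_add_of_samuelson hI hJ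
      hIc.isPreconnected hJc.isPreconnected hb hB hΔ hJ₁ hJ₂
    exact exists_solution_of_eq_mul_add hI hJ hIc hJc hf hg hfg
  have hdiff {g : ℝ × ℝ → ℝ} (hg : ContDiffOn ℝ ∞ g (I ×ˢ J)) :
      ∀ p ∈ I ×ˢ J, DifferentiableAt ℝ g p := fun p hp =>
    (hg.contDiffAt (hU.mem_nhds hp)).differentiableAt (by simp)
  have hu : ∀ x ∈ I, deriv s₁ x - deriv t₁ x = 0 := fun x hx =>
    eq_zero_of_mul_add_eq_zero (u := fun x => deriv s₁ x - deriv t₁ x)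
      (v := fun y => deriv s₂ y - deriv t₂ y) hI hJ ⟨y₀, hy₀⟩
      (hdiff hb) (hdiff (contDiffOn_pdx hU hb)) hΔ
      (fun x hx y hy => by linear_combination hs (x, y) ⟨hx, hy⟩ - ht (x, y) ⟨hx, hy⟩) hx
  have hv : ∀ y ∈ J, deriv s₂ y - deriv t₂ y = 0 := fun y hy => by
    linear_combination hs (x₀, y) ⟨hx₀, hy⟩ - ht (x₀, y) ⟨hx₀, hy⟩ - b (x₀, y) * hu x₀ hx₀
  exact ⟨exists_sub_eq_of_deriv_eq hI hIc.isPreconnected hs₁ ht₁ fun x hx =>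
      sub_eq_zero.1 (hu x hx),
    exists_sub_eq_of_deriv_eq hJ hJc.isPreconnected hs₂ ht₂ fun y hy => sub_eq_zero.1 (hv y hy)⟩
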